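/- arXiv:1104.1690 — 3 statements merged into one kernel-verified Lean document; each statement's English description precedes it below -/
import Mathlib

section
/- For every matrix A ∈ ℂ^{m×n} and every pair of positive definite Hermitian matrices M ∈ ℂ^{m×m} and N ∈ ℂ^{n×n}, there exists a matrix X ∈ ℂ^{n×m} satisfying the four weighted Penrose equations: (1) AXA = A, (2) XAX = X, (3) (MAX)* = MAX, (4) (NXA)* = NXA. That is, the weighted Moore-Penrose inverse A†_{M,N} always exists. -/
/-!
Write `M = SᴴS` and `N = TᴴT` with `S`, `T` invertible (positive square roots). Conjugating by
`S` and `T` turns the weighted Penrose equations for `S⁻¹ B T` into the ordinary ones for `B`, so it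
suffices to find an ordinary Moore–Penrose inverse of `B = S A T⁻¹`. For that, let `C = BᴴB` and let
`Y` be `C` with `t ↦ t⁻¹` (where `0⁻¹ = 0`) applied to its finite spectrum; then `CYC = C`,
`YCY = Y`, and `X = Y Bᴴ` satisfies the four equations (`BXB = B` because `ker (BᴴB) = ker B`).
-/

open Matrix ComplexOrder

section FiniteSpectrum

variable {A : Type*} [Ring A] [StarRing A] [TopologicalSpace A] [Algebra ℝ A]
  [ContinuousFunctionalCalculus ℝ A IsSelfAdjoint] {a : A}

theorem IsSelfAdjoint.mul_cfc_inv_mul_self (ha : IsSelfAdjoint a) (hfin : (spectrum ℝ a).Finite) :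
    a * cfc (·⁻¹ : ℝ → ℝ) a * a = a :=
  calc a * cfc (·⁻¹ : ℝ → ℝ) a * a = cfc (fun x : ℝ ↦ x * x⁻¹ * x) a := by
        rw [cfc_mul _ _ a (hfin.continuousOn _) (hfin.continuousOn _),
          cfc_mul _ _ a (hfin.continuousOn _) (hfin.continuousOn _), cfc_id' ℝ a]
    _ = cfc (fun x : ℝ ↦ x) a := by simp only [mul_inv_mul_cancel]
    _ = a := cfc_id' ℝ a

theorem IsSelfAdjoint.cfc_inv_mul_self_mul_cfc_inv (ha : IsSelfAdjoint a)
    (hfin : (spectrum ℝ a).Finite) :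
    cfc (·⁻¹ : ℝ → ℝ) a * a * cfc (·⁻¹ : ℝ → ℝ) a = cfc (·⁻¹ : ℝ → ℝ) a :=
  calc cfc (·⁻¹ : ℝ → ℝ) a * a * cfc (·⁻¹ : ℝ → ℝ) a = cfc (fun x : ℝ ↦ x⁻¹ * x * x⁻¹) a := by
        rw [cfc_mul _ _ a (hfin.continuousOn _) (hfin.continuousOn _),
          cfc_mul _ _ a (hfin.continuousOn _) (hfin.continuousOn _), cfc_id' ℝ a]
    _ = cfc (·⁻¹ : ℝ → ℝ) a := cfc_congr fun x _ ↦ by simpa using mul_inv_mul_cancel x⁻¹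

end FiniteSpectrum

namespace Matrix

variable {m n R : Type*} [Fintype m] [Fintype n]

def IsMoorePenroseInverse [Semiring R] [Star R] (A : Matrix m n R) (X : Matrix n m R) : Prop :=
  A * X * A = A ∧ X * A * X = X ∧ (A * X)ᴴ = A * X ∧ (X * A)ᴴ = X * A

def IsWeightedMoorePenroseInverse [Semiring R] [Star R] (M : Matrix m m R) (N : Matrix n n R)
    (A : Matrix m n R) (X : Matrix n m R) : Prop :=
  A * X * A = A ∧ X * A * X = X ∧ (M * A * X)ᴴ = M * A * X ∧ (N * X * A)ᴴ = N * X * A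

section StarOrdered

variable [Ring R] [PartialOrder R] [StarRing R] [StarOrderedRing R] [NoZeroDivisors R]

theorem mul_eq_zero_of_conjTranspose_mul_self_mul_eq_zero {k : Type*} {A : Matrix m n R}
    {B : Matrix n k R} (h : Aᴴ * A * B = 0) : A * B = 0 :=
  conjTranspose_mul_self_eq_zero.mp <| by
    rw [conjTranspose_mul, Matrix.mul_assoc, ← Matrix.mul_assoc Aᴴ, h, Matrix.mul_zero]

theorem isMoorePenroseInverse_mul_conjTranspose [DecidableEq n] {A : Matrix m n R}
    {Y : Matrix n n R} (hY : Y.IsHermitian) (hcomm : Commute (Aᴴ * A) Y)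
    (h₁ : Aᴴ * A * Y * (Aᴴ * A) = Aᴴ * A) (h₂ : Y * (Aᴴ * A) * Y = Y) :
    IsMoorePenroseInverse A (Y * Aᴴ) := by
  have hA : A * (Y * (Aᴴ * A) - 1) = 0 :=
    mul_eq_zero_of_conjTranspose_mul_self_mul_eq_zero <| by
      rw [Matrix.mul_sub, Matrix.mul_one, ← Matrix.mul_assoc, h₁, sub_self]
  refine ⟨?_, ?_, ?_, ?_⟩
  · rw [Matrix.mul_sub, Matrix.mul_one, sub_eq_zero] at hA
    simpa only [Matrix.mul_assoc] using hA
  · simpa only [Matrix.mul_assoc] using congrArg (· * Aᴴ) h₂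
  · rw [conjTranspose_mul, conjTranspose_mul, conjTranspose_conjTranspose, hY.eq, Matrix.mul_assoc]
  · rw [Matrix.mul_assoc, conjTranspose_mul, hY.eq, (isHermitian_conjTranspose_mul_self A).eq,
      hcomm.eq]

end StarOrdered

theorem exists_isMoorePenroseInverse {𝕜 : Type*} [RCLike 𝕜] [DecidableEq n] (A : Matrix m n 𝕜) :
    ∃ X, IsMoorePenroseInverse A X := by
  have hC : IsSelfAdjoint (Aᴴ * A) := isHermitian_conjTranspose_mul_self A
  refine ⟨cfc (·⁻¹ : ℝ → ℝ) (Aᴴ * A) * Aᴴ,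
    isMoorePenroseInverse_mul_conjTranspose (cfc_predicate _ _) ?_
      (hC.mul_cfc_inv_mul_self finite_real_spectrum)
      (hC.cfc_inv_mul_self_mul_cfc_inv finite_real_spectrum)⟩
  simpa only [cfc_id' ℝ (Aᴴ * A)] using cfc_commute_cfc (fun x : ℝ ↦ x) (·⁻¹) (Aᴴ * A)

theorem IsMoorePenroseInverse.isWeightedMoorePenroseInverse_conj [CommRing R] [StarRing R]
    [DecidableEq m] [DecidableEq n] {B : Matrix m n R} {P : Matrix n m R} {S : Matrix m m R}
    {T : Matrix n n R} (hP : IsMoorePenroseInverse B P) (hS : IsUnit S) (hT : IsUnit T) :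
    IsWeightedMoorePenroseInverse (Sᴴ * S) (Tᴴ * T) (S⁻¹ * B * T) (T⁻¹ * P * S) := by
  obtain ⟨h₁, h₂, h₃, h₄⟩ := hP
  rw [isUnit_iff_isUnit_det] at hS hT
  refine ⟨?_, ?_, ?_, ?_⟩
  all_goals simp only [Matrix.mul_assoc, mul_nonsing_inv_cancel_left _ _ hS,
    mul_nonsing_inv_cancel_left _ _ hT, conjTranspose_mul, conjTranspose_conjTranspose]
  · conv_rhs => rw [← h₁]
    simp only [Matrix.mul_assoc]
  · conv_rhs => rw [← h₂]
    simp only [Matrix.mul_assoc]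
  · rw [← Matrix.mul_assoc Pᴴ, ← conjTranspose_mul, h₃, Matrix.mul_assoc]
  · rw [← Matrix.mul_assoc Bᴴ, ← conjTranspose_mul, h₄, Matrix.mul_assoc]

theorem PosDef.exists_isUnit_eq_conjTranspose_mul_self {𝕜 : Type*} [RCLike 𝕜] [DecidableEq n]
    {M : Matrix n n 𝕜} (hM : M.PosDef) : ∃ S : Matrix n n 𝕜, IsUnit S ∧ M = Sᴴ * S := by
  open scoped MatrixOrder in
  refine ⟨CFC.sqrt M, (CFC.isUnit_sqrt_iff M hM.posSemidef.nonneg).mpr hM.isUnit, ?_⟩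
  rw [(CFC.sqrt_nonneg M).posSemidef.isHermitian.eq, CFC.sqrt_mul_sqrt_self M hM.posSemidef.nonneg]

end Matrix

/-- Existence of the weighted Moore-Penrose inverse `A†_{M,N}`: for every `A` and
positive definite Hermitian `M`, `N`, there is an `X` satisfying the four weighted
Penrose equations. -/
theorem weighted_moore_penrose_exists {m n : ℕ}
    (A : Matrix (Fin m) (Fin n) ℂ)
    (M : Matrix (Fin m) (Fin m) ℂ) (N : Matrix (Fin n) (Fin n) ℂ)
    (hM : M.PosDef) (hN : N.PosDef) :
    ∃ X : Matrix (Fin n) (Fin m) ℂ,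
      A * X * A = A ∧ X * A * X = X ∧
      (M * A * X)ᴴ = M * A * X ∧ (N * X * A)ᴴ = N * X * A := by
  obtain ⟨S, hS, rfl⟩ := hM.exists_isUnit_eq_conjTranspose_mul_self
  obtain ⟨T, hT, rfl⟩ := hN.exists_isUnit_eq_conjTranspose_mul_self
  obtain ⟨P, hP⟩ := exists_isMoorePenroseInverse (S * A * T⁻¹)
  have hA : S⁻¹ * (S * A * T⁻¹) * T = A := by
    rw [isUnit_iff_isUnit_det] at hS hT
    simp only [Matrix.mul_assoc, nonsing_inv_mul_cancel_left _ _ hS, nonsing_inv_mul _ hT,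
      Matrix.mul_one]
  exact ⟨_, hA ▸ hP.isWeightedMoorePenroseInverse_conj hS hT⟩
end

section
/- Let A' ∈ ℂ^{m×k}, a ∈ ℂ^{m×1}, let M ∈ ℂ^{m×m} be positive definite Hermitian, and let N ∈ ℂ^{(k+1)×(k+1)} be positive definite Hermitian, written in block form N = [[N', l], [l*, n]] with N' ∈ ℂ^{k×k}, l ∈ ℂ^{k×1} and n ∈ ℂ^{1×1} (so N' is positive definite, hence invertible). Suppose X' ∈ ℂ^{k×m} satisfies the four weighted Penrose equations for (A', M, N'): A'X'A' = A', X'A'X' = X', (MA'X')* = MA'X', (N'X'A')* = N'X'A'. Define d := X'a ∈ ℂ^{k×1} and c := a − A'd ∈ ℂ^{m×1}, and assume c ≠ 0. Set b* := ((c*Mc)₀₀)⁻¹ · (c*M) ∈ ℂ^{1×m} (the scalar (c*Mc)₀₀ is nonzero since M is positive definite and c ≠ 0), and let X ∈ ℂ^{(k+1)×m} be the matrix whose first k rows form the block X' − (d + (I − X'A')N'⁻¹l)·b* and whose last row is b*. Then, with A := [A' | a] ∈ ℂ^{m×(k+1)} (the matrix A' augmented by the column a), X satisfies the four weighted Penrose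 equations for (A, M, N): AXA = A, XAX = X, (MAX)* = MAX, (NXA)* = NXA. -/
/-!
Write `c = a - A' X' a` for the part of the new column that `A'` does not reach. Equation (3)
for `X'` makes `c` `M`-orthogonal to the range of `A'` (`c* M A' = 0`), so the row `b` kills `A'`
and satisfies `b c = 1`. Consequently `A X = A' X' + c b`, the old `M`-orthogonal projector plus a
rank-one one, and `X A = [[X' A', -w], [0, 1]]` with `w = (1 - X' A') N'⁻¹ l`; equations (1)–(3)
follow directly. For (4), equation (4) for `X'` says that `(1 - X' A') N'⁻¹` is Hermitian and that
`N' (1 - X' A') N'⁻¹ = (1 - X' A')*`, which is exactly what makes the off-diagonal blocks of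
`N X A` adjoint to each other and its corner Hermitian.
-/

open Matrix ComplexOrder

namespace Matrix

structure IsWeightedMoorePenroseInverse_s3 {R m p : Type*} [Semiring R] [StarRing R]
    [Fintype m] [Fintype p] (M : Matrix m m R) (N : Matrix p p R) (A : Matrix m p R)
    (X : Matrix p m R) : Prop where
  mul_mul_self : A * X * A = A
  self_mul_mul : X * A * X = X
  isHermitian_mul_mul_left : (M * A * X).IsHermitian
  isHermitian_mul_mul_right : (N * X * A).IsHermitian

section CommRing

variable {R p : Type*} [CommRing R] [StarRing R] [Fintype p] [DecidableEq p]

lemma IsHermitian.isHermitian_mul_nonsing_inv {N Q : Matrix p p R} (hN : N.IsHermitian)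
    (hdet : IsUnit N.det) (hNQ : (N * Q).IsHermitian) : (Q * N⁻¹).IsHermitian := by
  have h : Q * N⁻¹ = (N⁻¹)ᴴ * (N * Q) * N⁻¹ := by
    rw [conjTranspose_nonsing_inv, hN.eq, ← Matrix.mul_assoc, nonsing_inv_mul _ hdet,
      Matrix.one_mul]
  rw [h]
  exact isHermitian_conjTranspose_mul_mul _ hNQ

lemma IsHermitian.mul_mul_nonsing_inv_eq_conjTranspose {N Q : Matrix p p R} (hN : N.IsHermitian)
    (hdet : IsUnit N.det) (hNQ : (N * Q).IsHermitian) : N * Q * N⁻¹ = Qᴴ :=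
  calc N * Q * N⁻¹ = Qᴴ * N * N⁻¹ := by rw [← hNQ.eq, conjTranspose_mul, hN.eq]
    _ = Qᴴ := by rw [Matrix.mul_assoc, mul_nonsing_inv _ hdet, Matrix.mul_one]

lemma isHermitian_fromBlocks_mul_fromBlocks {o : Type*} [Fintype o] [DecidableEq o]
    {N' P : Matrix p p R} {l : Matrix p o R} {n : Matrix o o R}
    (hN : (fromBlocks N' l lᴴ n).IsHermitian) (hdet : IsUnit N'.det)
    (hP : (N' * P).IsHermitian) :
    (fromBlocks N' l lᴴ n * fromBlocks P (-((1 - P) * N'⁻¹ * l)) 0 1).IsHermitian := by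
  obtain ⟨hN', -, -, hn⟩ := isHermitian_fromBlocks_iff.mp hN
  have hQ : (N' * (1 - P)).IsHermitian := by
    rw [Matrix.mul_sub, Matrix.mul_one]
    exact hN'.sub hP
  have hNQ : N' * ((1 - P) * N'⁻¹) = 1 - Pᴴ := by
    rw [← Matrix.mul_assoc, hN'.mul_mul_nonsing_inv_eq_conjTranspose hdet hQ,
      conjTranspose_sub, conjTranspose_one]
  rw [fromBlocks_multiply]
  simp only [Matrix.mul_zero, add_zero, Matrix.mul_one, Matrix.mul_neg]
  refine hP.fromBlocks ?_ ?_
  · rw [← Matrix.mul_assoc N', hNQ, Matrix.sub_mul, Matrix.one_mul, neg_sub, sub_add_cancel,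
      conjTranspose_mul, conjTranspose_conjTranspose]
  · rw [← Matrix.mul_assoc]
    exact (isHermitian_conjTranspose_mul_mul l (hN'.isHermitian_mul_nonsing_inv hdet hQ)).neg.add hn

end CommRing

lemma conjTranspose_sub_mul_mul_eq_zero {R m p o : Type*} [Ring R] [StarRing R] [Fintype m]
    [Fintype p] {M : Matrix m m R} {A' : Matrix m p R} {X' : Matrix p m R} {a : Matrix m o R}
    (hM : M.IsHermitian) (h1 : A' * X' * A' = A') (h3 : (M * A' * X').IsHermitian) :
    (a - A' * (X' * a))ᴴ * M * A' = 0 := by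
  have hMAX : (A' * X')ᴴ * M = M * A' * X' := by
    rw [← h3.eq, conjTranspose_mul, conjTranspose_mul, conjTranspose_mul, hM.eq,
      Matrix.mul_assoc]
  calc (a - A' * (X' * a))ᴴ * M * A' = aᴴ * M * A' - aᴴ * ((A' * X')ᴴ * M) * A' := by
        rw [← Matrix.mul_assoc A', conjTranspose_sub, conjTranspose_mul, Matrix.sub_mul,
          Matrix.sub_mul]
        simp only [Matrix.mul_assoc]
    _ = aᴴ * M * A' - aᴴ * M * (A' * X' * A') := by
        rw [hMAX]; simp only [Matrix.mul_assoc]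
    _ = 0 := by rw [h1, sub_self]

lemma fromCols_mul_fromRows_sub {R m p o : Type*} [Ring R] [Fintype m] [Fintype p] [Fintype o]
    {A' : Matrix m p R} {X' : Matrix p m R} {a : Matrix m o R} {b : Matrix o m R}
    {w : Matrix p o R} (hAw : A' * w = 0) :
    fromCols A' a * fromRows (X' - (X' * a + w) * b) b = A' * X' + (a - A' * (X' * a)) * b := by
  rw [fromCols_mul_fromRows, Matrix.mul_sub, ← Matrix.mul_assoc A', Matrix.mul_add, hAw,
    add_zero, Matrix.sub_mul]
  abel

lemma fromRows_mul_fromCols_sub {R m p o : Type*} [Ring R] [Fintype m] [Fintype o]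
    [DecidableEq o] {A' : Matrix m p R} {X' : Matrix p m R} {a : Matrix m o R}
    {b : Matrix o m R} {w : Matrix p o R} (hbA : b * A' = 0) (hba : b * a = 1) :
    fromRows (X' - (X' * a + w) * b) b * fromCols A' a = fromBlocks (X' * A') (-w) 0 1 := by
  rw [fromRows_mul_fromCols, hbA, hba, Matrix.sub_mul, Matrix.sub_mul, Matrix.mul_assoc _ b,
    hbA, Matrix.mul_zero, sub_zero, Matrix.mul_assoc _ b, hba, Matrix.mul_one,
    sub_add_cancel_left]

theorem IsWeightedMoorePenroseInverse_s3.fromCols_fromRows {R m p o : Type*} [CommRing R]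
    [StarRing R] [Fintype m] [Fintype p] [DecidableEq p] [Fintype o] [DecidableEq o]
    {M : Matrix m m R} {N' : Matrix p p R} {l : Matrix p o R} {n : Matrix o o R}
    {A' : Matrix m p R} {X' : Matrix p m R} {a : Matrix m o R} {b : Matrix o m R}
    (hX' : IsWeightedMoorePenroseInverse_s3 M N' A' X')
    (hN : (fromBlocks N' l lᴴ n).IsHermitian) (hdet : IsUnit N'.det)
    (hbA : b * A' = 0) (hbc : b * (a - A' * (X' * a)) = 1)
    (hMcb : (M * (a - A' * (X' * a)) * b).IsHermitian) :
    IsWeightedMoorePenroseInverse_s3 M (fromBlocks N' l lᴴ n) (fromCols A' a)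
      (fromRows (X' - (X' * a + (1 - X' * A') * N'⁻¹ * l) * b) b) := by
  set w := (1 - X' * A') * N'⁻¹ * l
  have hAw : A' * w = 0 := by
    simp only [w, ← Matrix.mul_assoc, Matrix.mul_sub, Matrix.mul_one, hX'.mul_mul_self, sub_self,
      Matrix.zero_mul]
  have hba : b * a = 1 := by
    rwa [Matrix.mul_sub, ← Matrix.mul_assoc, hbA, Matrix.zero_mul, sub_zero] at hbc
  have hAX := fromCols_mul_fromRows_sub (X' := X') (a := a) (b := b) hAw
  have hXA := fromRows_mul_fromCols_sub (X' := X') (w := w) hbA hba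
  refine ⟨?_, ?_, ?_, ?_⟩
  · rw [hAX, Matrix.mul_fromCols, Matrix.add_mul, Matrix.add_mul, Matrix.mul_assoc _ b, hbA,
      Matrix.mul_zero, add_zero, hX'.mul_mul_self, Matrix.mul_assoc _ b, hba, Matrix.mul_one,
      Matrix.mul_assoc, add_sub_cancel]
  · have hXAXa : X' * A' * (X' * a) = X' * a := by rw [← Matrix.mul_assoc, hX'.self_mul_mul]
    have hXAw : X' * A' * w = 0 := by rw [Matrix.mul_assoc, hAw, Matrix.mul_zero]
    rw [hXA, fromBlocks_mul_fromRows, Matrix.mul_sub, hX'.self_mul_mul,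
      ← Matrix.mul_assoc (X' * A'), Matrix.mul_add, hXAXa, hXAw, add_zero, Matrix.zero_mul,
      Matrix.one_mul, zero_add, Matrix.neg_mul, ← sub_eq_add_neg, sub_sub, ← Matrix.add_mul]
  · rw [Matrix.mul_assoc, hAX, Matrix.mul_add, ← Matrix.mul_assoc, ← Matrix.mul_assoc]
    exact hX'.isHermitian_mul_mul_left.add hMcb
  · rw [Matrix.mul_assoc, hXA]
    refine isHermitian_fromBlocks_mul_fromBlocks hN hdet ?_
    rw [← Matrix.mul_assoc]
    exact hX'.isHermitian_mul_mul_right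

lemma inv_smul_mul_eq_one {K m : Type*} [Field K] [Fintype m] {r : Matrix (Fin 1) m K}
    {c : Matrix m (Fin 1) K} (h : (r * c) 0 0 ≠ 0) : ((r * c) 0 0)⁻¹ • r * c = 1 := by
  ext i j
  fin_cases i; fin_cases j
  simp [Matrix.smul_mul, h]

lemma IsHermitian.isHermitian_mul_mul_inv_smul {K m : Type*} [Field K] [StarRing K] [Fintype m]
    {M : Matrix m m K} (hM : M.IsHermitian) (c : Matrix m (Fin 1) K) :
    (M * c * (((cᴴ * M * c) 0 0)⁻¹ • (cᴴ * M))).IsHermitian := by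
  have hγ : IsSelfAdjoint ((cᴴ * M * c) 0 0) := (isHermitian_conjTranspose_mul_mul c hM).apply 0 0
  have hcM : cᴴ * M = (M * c)ᴴ := by rw [conjTranspose_mul, hM.eq]
  rw [Matrix.mul_smul]
  refine IsHermitian.smul ?_ hγ.inv₀
  rw [hcM]
  exact isHermitian_mul_conjTranspose_self (M * c)

lemma PosDef.conjTranspose_mul_mul_apply_pos {𝕜 m : Type*} [RCLike 𝕜] [Fintype m]
    {M : Matrix m m 𝕜} (hM : M.PosDef) {c : Matrix m (Fin 1) 𝕜} (hc : c ≠ 0) :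
    0 < (cᴴ * M * c) 0 0 := by
  refine (hM.conjTranspose_mul_mul_same (mulVec_injective_iff.mpr ?_)).diag_pos
  refine linearIndependent_unique_iff.mpr fun h => hc ?_
  ext i j
  fin_cases j
  exact congrFun h i

end Matrix

/-- Recursive step of the Greville/Wang partitioning method (Lemma 2.1) in the
case `c ≠ 0`: if `X'` is the weighted Moore-Penrose inverse of `A'` w.r.t.
`(M, N')`, then the block matrix `X` built from `X'` and `b*` is the weighted
Moore-Penrose inverse of `A = [A' | a]` w.r.t. `(M, N)`. -/
theorem weighted_moore_penrose_partition_step_c_ne_zero {m k : ℕ}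
    (A' : Matrix (Fin m) (Fin k) ℂ) (a : Matrix (Fin m) (Fin 1) ℂ)
    (M : Matrix (Fin m) (Fin m) ℂ) (hM : M.PosDef)
    (N' : Matrix (Fin k) (Fin k) ℂ) (l : Matrix (Fin k) (Fin 1) ℂ)
    (n : Matrix (Fin 1) (Fin 1) ℂ)
    (N : Matrix (Fin k ⊕ Fin 1) (Fin k ⊕ Fin 1) ℂ)
    (hNdef : N = Matrix.fromBlocks N' l lᴴ n)
    (hN : N.PosDef)
    (X' : Matrix (Fin k) (Fin m) ℂ)
    (h1 : A' * X' * A' = A') (h2 : X' * A' * X' = X')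
    (h3 : (M * A' * X')ᴴ = M * A' * X') (h4 : (N' * X' * A')ᴴ = N' * X' * A')
    (d : Matrix (Fin k) (Fin 1) ℂ) (hd : d = X' * a)
    (c : Matrix (Fin m) (Fin 1) ℂ) (hc : c = a - A' * d)
    (hcne : c ≠ 0)
    (b : Matrix (Fin 1) (Fin m) ℂ)
    (hb : b = ((cᴴ * M * c) 0 0)⁻¹ • (cᴴ * M))
    (X : Matrix (Fin k ⊕ Fin 1) (Fin m) ℂ)
    (hX : X = Matrix.fromRows (X' - (d + (1 - X' * A') * N'⁻¹ * l) * b) b)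
    (A : Matrix (Fin m) (Fin k ⊕ Fin 1) ℂ)
    (hA : A = Matrix.fromCols A' a) :
    A * X * A = A ∧ X * A * X = X ∧
    (M * A * X)ᴴ = M * A * X ∧ (N * X * A)ᴴ = N * X * A := by
  subst hNdef hX hA hb hc hd
  set c := a - A' * (X' * a)
  have hbA : ((cᴴ * M * c) 0 0)⁻¹ • (cᴴ * M) * A' = 0 := by
    rw [Matrix.smul_mul, conjTranspose_sub_mul_mul_eq_zero hM.1 h1 h3, smul_zero]
  obtain ⟨e1, e2, e3, e4⟩ :=
    IsWeightedMoorePenroseInverse_s3.fromCols_fromRows ⟨h1, h2, h3, h4⟩ hN.1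
      ((isUnit_iff_isUnit_det _).mp (hN.submatrix Sum.inl_injective).isUnit) hbA
      (inv_smul_mul_eq_one (hM.conjTranspose_mul_mul_apply_pos hcne).ne')
      (hM.1.isHermitian_mul_mul_inv_smul _)
  exact ⟨e1, e2, e3, e4⟩
end

section
/- Let A' ∈ ℂ^{m×k}, a ∈ ℂ^{m×1}, let M ∈ ℂ^{m×m} be positive definite Hermitian, and let N ∈ ℂ^{(k+1)×(k+1)} be positive definite Hermitian, written in block form N = [[N', l], [l*, n]] with N' ∈ ℂ^{k×k}, l ∈ ℂ^{k×1} and n ∈ ℂ^{1×1} (so N' is positive definite, hence invertible). Suppose X' ∈ ℂ^{k×m} satisfies the four weighted Penrose equations for (A', M, N'): A'X'A' = A', X'A'X' = X', (MA'X')* = MA'X', (N'X'A')* = N'X'A'. Define d := X'a ∈ ℂ^{k×1} and c := a − A'd, and assume c = 0. Define the 1×1 matrix δ := n + d*N'd − (d*l + l*d) − l*(I − X'A')N'⁻¹l, and assume its entry δ₀₀ is nonzero. Set b* := (δ₀₀)⁻¹ · ((d*N' − l*)X') ∈ ℂ^{1×m}, and let X ∈ ℂ^{(k+1)×m} be the matrix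 whose first k rows form the block X' − (d + (I − X'A')N'⁻¹l)·b* and whose last row is b*. Then, with A := [A' | a] ∈ ℂ^{m×(k+1)}, X satisfies the four weighted Penrose equations for (A, M, N): AXA = A, XAX = X, (MAX)* = MAX, (NXA)* = NXA. -/
open Matrix ComplexOrder

/-!
Write `E = X'A'`, `v = d + (1 - E) N'⁻¹ l` and `p = N'd - Eᴴl`. Since `A'E = A'` and `a = A'd`,
`A'v = a`, hence `AX = A'X'` and the first three equations are inherited from `X'`.
For the fourth, `Ed = d` gives `XA = [E - v b̃; b̃] [1 | d]` with `b̃ = δ⁻¹ pᴴ`; multiplying by `N`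
and using `N'v - l = p` and `n - lᴴv + dᴴp = δ`, the product collapses to
`[1 | d]ᴴ (N'E - δ⁻¹ p pᴴ) [1 | d]`, which is Hermitian because `N'E` and `δ` are.
-/

namespace Matrix

variable {R : Type*} {ι m k o : Type*} [Fintype k]

lemma mul_eq_smul_of_subsingleton [CommSemiring R] [Subsingleton ι] [Fintype ι]
    (δ : Matrix ι ι R) (B : Matrix ι o R) (i : ι) : δ * B = δ i i • B := by
  ext i' j
  simp [mul_apply, Subsingleton.elim i' i, Fintype.sum_subsingleton _ i]

section Ring

variable [Ring R] [Fintype ι]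

lemma fromCols_mul_fromRows_sub_mul {A' : Matrix m k R} {a : Matrix m ι R} {v : Matrix k ι R}
    (hv : A' * v = a) (X' : Matrix k o R) (b : Matrix ι o R) :
    fromCols A' a * fromRows (X' - v * b) b = A' * X' := by
  rw [fromCols_mul_fromRows, Matrix.mul_sub, ← Matrix.mul_assoc, hv, sub_add_cancel]

lemma fromRows_sub_mul_mul_eq [Fintype m] {X' : Matrix k m R} {b : Matrix ι m R}
    {A : Matrix m o R} {F : Matrix k k R} {G : Matrix ι k R} {u : Matrix k o R}
    (hX' : X' * A = F * u) (hb : b * A = G * u) (v : Matrix k ι R) :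
    fromRows (X' - v * b) b * A = fromRows (F - v * G) G * u := by
  rw [fromRows_mul, fromRows_mul, Matrix.sub_mul, Matrix.sub_mul, Matrix.mul_assoc, hb, hX',
    Matrix.mul_assoc]

end Ring

section Hermitian

variable [CommRing R] [StarRing R] {N F : Matrix k k R} {l d : Matrix k ι R}

lemma IsHermitian.conjTranspose_mul_eq_mul (hN : N.IsHermitian) (hNF : (N * F).IsHermitian) :
    Fᴴ * N = N * F := by
  rw [← hNF.eq, conjTranspose_mul, hN.eq]

lemma IsHermitian.conjTranspose_mul_sub_conjTranspose_mul (hN : N.IsHermitian)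
    (hNF : (N * F).IsHermitian) (hFd : F * d = d) :
    (N * d - Fᴴ * l)ᴴ = (dᴴ * N - lᴴ) * F := by
  rw [conjTranspose_sub, conjTranspose_mul, conjTranspose_mul, hN.eq, conjTranspose_conjTranspose,
    Matrix.sub_mul, Matrix.mul_assoc dᴴ, ← hN.conjTranspose_mul_eq_mul hNF, ← Matrix.mul_assoc,
    ← conjTranspose_mul, hFd]

variable [DecidableEq k]

lemma IsHermitian.mul_one_sub (hN : N.IsHermitian) (hNF : (N * F).IsHermitian) :
    (N * (1 - F)).IsHermitian := by
  rw [Matrix.mul_sub, Matrix.mul_one]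
  exact hN.sub hNF

lemma IsHermitian.mul_mul_inv_eq_conjTranspose (hN : N.IsHermitian)
    (hNF : (N * F).IsHermitian) (hdet : IsUnit N.det) : N * F * N⁻¹ = Fᴴ := by
  rw [← hN.conjTranspose_mul_eq_mul hNF, Matrix.mul_assoc, mul_nonsing_inv _ hdet, Matrix.mul_one]

lemma IsHermitian.isHermitian_mul_inv (hN : N.IsHermitian) (hNF : (N * F).IsHermitian)
    (hdet : IsUnit N.det) : (F * N⁻¹).IsHermitian := by
  have h : F * N⁻¹ = N⁻¹ᴴ * (N * F) * N⁻¹ := by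
    rw [hN.inv.eq, ← Matrix.mul_assoc, nonsing_inv_mul _ hdet, Matrix.one_mul]
  rw [h]
  exact isHermitian_conjTranspose_mul_mul _ hNF

lemma IsHermitian.mul_add_sub_mul_inv_mul_sub (hN : N.IsHermitian) (hNF : (N * F).IsHermitian)
    (hdet : IsUnit N.det) : N * (d + (1 - F) * N⁻¹ * l) - l = N * d - Fᴴ * l := by
  rw [Matrix.mul_add, ← Matrix.mul_assoc N, ← Matrix.mul_assoc N,
    hN.mul_mul_inv_eq_conjTranspose (hN.mul_one_sub hNF) hdet, conjTranspose_sub,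
    conjTranspose_one, Matrix.sub_mul, Matrix.one_mul]
  abel

end Hermitian

section Block

variable [CommRing R] [StarRing R] [DecidableEq k] [Fintype ι] [Subsingleton ι]

lemma fromBlocks_mul_fromRows_eq_conjTranspose_mul {N' E : Matrix k k R} {l v d p : Matrix k ι R}
    {n δ : Matrix ι ι R} {s : R} {i : ι} (hp : N' * v - l = p) (hpE : pᴴ = (dᴴ * N' - lᴴ) * E)
    (hδ : n - lᴴ * v + dᴴ * p = δ) (hs : s * δ i i = 1) :
    fromBlocks N' l lᴴ n * fromRows (E - v * (s • pᴴ)) (s • pᴴ) =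
      (fromCols 1 d)ᴴ * (N' * E - s • (p * pᴴ)) := by
  rw [conjTranspose_fromCols_eq_fromRows_conjTranspose, fromBlocks_mul_fromRows, fromRows_mul,
    conjTranspose_one, Matrix.one_mul]
  congr 1
  · rw [← hp]
    simp only [Matrix.mul_sub, Matrix.sub_mul, Matrix.mul_smul, smul_sub, Matrix.mul_assoc]
    abel
  · have hδp : s • (δ * pᴴ) = pᴴ := by
      rw [mul_eq_smul_of_subsingleton _ _ i, smul_smul, hs, one_smul]
    calc lᴴ * (E - v * (s • pᴴ)) + n * (s • pᴴ) = lᴴ * E + s • ((n - lᴴ * v) * pᴴ) := by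
          simp only [Matrix.mul_sub, Matrix.sub_mul, Matrix.mul_smul, smul_sub, Matrix.mul_assoc]
          abel
      _ = lᴴ * E + s • (δ * pᴴ) - s • (dᴴ * p * pᴴ) := by
          rw [eq_sub_of_add_eq hδ, Matrix.sub_mul, smul_sub, add_sub_assoc]
      _ = dᴴ * (N' * E - s • (p * pᴴ)) := by
          rw [hδp, Matrix.mul_sub, Matrix.mul_smul, hpE]
          simp only [Matrix.sub_mul, Matrix.mul_sub, Matrix.mul_assoc]
          abel

end Block

section Delta

variable [Ring R] [StarRing R] {N Q : Matrix k k R} {l d : Matrix k ι R}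
  {n : Matrix ι ι R}

lemma IsHermitian.add_sub_sub_conjTranspose_mul_mul (hn : n.IsHermitian) (hN : N.IsHermitian)
    (hQ : Q.IsHermitian) : (n + dᴴ * N * d - (dᴴ * l + lᴴ * d) - lᴴ * Q * l).IsHermitian := by
  have hcross : (dᴴ * l + lᴴ * d).IsHermitian := by
    rw [IsHermitian, conjTranspose_add, conjTranspose_mul, conjTranspose_mul,
      conjTranspose_conjTranspose, conjTranspose_conjTranspose, add_comm]
  exact ((hn.add (isHermitian_conjTranspose_mul_mul d hN)).sub hcross).sub
    (isHermitian_conjTranspose_mul_mul l hQ)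

lemma sub_mul_add_add_mul_sub_eq {F : Matrix k k R} (hFd : F * d = d) :
    n - lᴴ * (d + Q * l) + dᴴ * (N * d - Fᴴ * l) =
      n + dᴴ * N * d - (dᴴ * l + lᴴ * d) - lᴴ * Q * l := by
  rw [Matrix.mul_add, Matrix.mul_sub, ← Matrix.mul_assoc dᴴ Fᴴ, ← conjTranspose_mul, hFd]
  simp only [Matrix.mul_assoc]
  abel

end Delta

end Matrix

theorem weighted_penrose_fromCols_of_eq_mul {R : Type*} [Field R] [StarRing R]
    {m k ι : Type*} [Fintype m] [Fintype k] [DecidableEq k] [Fintype ι] [Subsingleton ι]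
    {A' : Matrix m k R} {a : Matrix m ι R} {M : Matrix m m R} {N' : Matrix k k R}
    {l : Matrix k ι R} {n : Matrix ι ι R} {X' : Matrix k m R} {d : Matrix k ι R}
    {δ : Matrix ι ι R} {i : ι} {b : Matrix ι m R} {X : Matrix (k ⊕ ι) m R} {A : Matrix m (k ⊕ ι) R}
    (hN' : N'.IsHermitian) (hn : n.IsHermitian) (hdet : IsUnit N'.det)
    (h1 : A' * X' * A' = A') (h2 : X' * A' * X' = X')
    (h3 : (M * A' * X')ᴴ = M * A' * X') (h4 : (N' * X' * A')ᴴ = N' * X' * A')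
    (hd : d = X' * a) (ha : a = A' * d)
    (hδ : δ = n + dᴴ * N' * d - (dᴴ * l + lᴴ * d) - lᴴ * (1 - X' * A') * N'⁻¹ * l)
    (hδne : δ i i ≠ 0) (hb : b = (δ i i)⁻¹ • ((dᴴ * N' - lᴴ) * X'))
    (hX : X = fromRows (X' - (d + (1 - X' * A') * N'⁻¹ * l) * b) b) (hA : A = fromCols A' a) :
    A * X * A = A ∧ X * A * X = X ∧
    (M * A * X)ᴴ = M * A * X ∧ (fromBlocks N' l lᴴ n * X * A)ᴴ = fromBlocks N' l lᴴ n * X * A := by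
  have hA'E : A' * (X' * A') = A' := by rw [← Matrix.mul_assoc, h1]
  rw [Matrix.mul_assoc] at h4
  generalize hE : X' * A' = E at h4 hδ hX hA'E
  have hEd : E * d = d := by rw [← hE, Matrix.mul_assoc, ← ha, hd]
  have hA'v : A' * (d + (1 - E) * N'⁻¹ * l) = a := by
    rw [Matrix.mul_add, ← ha, ← Matrix.mul_assoc, ← Matrix.mul_assoc, Matrix.mul_sub,
      Matrix.mul_one, hA'E, sub_self, Matrix.zero_mul, Matrix.zero_mul, add_zero]
  have hpE : (N' * d - Eᴴ * l)ᴴ = (dᴴ * N' - lᴴ) * E :=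
    hN'.conjTranspose_mul_sub_conjTranspose_mul h4 hEd
  have hs : IsSelfAdjoint (δ i i)⁻¹ := by
    have hδh : δ.IsHermitian := by
      rw [hδ, Matrix.mul_assoc lᴴ (1 - E) N'⁻¹]
      exact hn.add_sub_sub_conjTranspose_mul_mul hN'
        (hN'.isHermitian_mul_inv (hN'.mul_one_sub h4) hdet)
    rw [IsSelfAdjoint, star_inv₀, hδh.apply]
  have hAX : A * X = A' * X' := by
    rw [hA, hX]; exact fromCols_mul_fromRows_sub_mul hA'v _ _
  have hX'A : X' * A = E * fromCols 1 d := by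
    rw [hA, mul_fromCols, mul_fromCols, hE, Matrix.mul_one, hEd, hd]
  have hbA : b * A = (δ i i)⁻¹ • (N' * d - Eᴴ * l)ᴴ * fromCols 1 d := by
    rw [hb, Matrix.smul_mul, Matrix.mul_assoc, hX'A, hpE, Matrix.smul_mul, Matrix.mul_assoc]
  have hbAX : b * (A' * X') = b := by
    rw [hb, Matrix.smul_mul, Matrix.mul_assoc, ← Matrix.mul_assoc X', h2]
  refine ⟨?_, ?_, ?_, ?_⟩
  · rw [hAX, hA, mul_fromCols, h1, ha, ← Matrix.mul_assoc, h1]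
  · rw [Matrix.mul_assoc, hAX, hX, fromRows_mul, hbAX, Matrix.sub_mul, Matrix.mul_assoc _ b, hbAX,
      ← Matrix.mul_assoc, h2]
  · rw [Matrix.mul_assoc, hAX, ← Matrix.mul_assoc]; exact h3
  · rw [Matrix.mul_assoc, hX, fromRows_sub_mul_mul_eq hX'A hbA, ← Matrix.mul_assoc,
      fromBlocks_mul_fromRows_eq_conjTranspose_mul (hN'.mul_add_sub_mul_inv_mul_sub h4 hdet)
        hpE (by rw [sub_mul_add_add_mul_sub_eq hEd, hδ, Matrix.mul_assoc lᴴ (1 - E) N'⁻¹])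
        (inv_mul_cancel₀ hδne)]
    exact isHermitian_conjTranspose_mul_mul _
      (IsHermitian.sub h4 ((isHermitian_mul_conjTranspose_self _).smul hs))

theorem weighted_moore_penrose_partition_step_c_eq_zero_general {m k : ℕ}
    (A' : Matrix (Fin m) (Fin k) ℂ) (a : Matrix (Fin m) (Fin 1) ℂ)
    (M : Matrix (Fin m) (Fin m) ℂ)
    (N' : Matrix (Fin k) (Fin k) ℂ) (l : Matrix (Fin k) (Fin 1) ℂ)
    (n : Matrix (Fin 1) (Fin 1) ℂ)
    (N : Matrix (Fin k ⊕ Fin 1) (Fin k ⊕ Fin 1) ℂ)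
    (hNdef : N = Matrix.fromBlocks N' l lᴴ n)
    (hN : N.PosDef)
    (X' : Matrix (Fin k) (Fin m) ℂ)
    (h1 : A' * X' * A' = A') (h2 : X' * A' * X' = X')
    (h3 : (M * A' * X')ᴴ = M * A' * X') (h4 : (N' * X' * A')ᴴ = N' * X' * A')
    (d : Matrix (Fin k) (Fin 1) ℂ) (hd : d = X' * a)
    (c : Matrix (Fin m) (Fin 1) ℂ) (hc : c = a - A' * d)
    (hceq : c = 0)
    (δ : Matrix (Fin 1) (Fin 1) ℂ)
    (hδ : δ = n + dᴴ * N' * d - (dᴴ * l + lᴴ * d) - lᴴ * (1 - X' * A') * N'⁻¹ * l)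
    (hδne : δ 0 0 ≠ 0)
    (b : Matrix (Fin 1) (Fin m) ℂ)
    (hb : b = (δ 0 0)⁻¹ • ((dᴴ * N' - lᴴ) * X'))
    (X : Matrix (Fin k ⊕ Fin 1) (Fin m) ℂ)
    (hX : X = Matrix.fromRows (X' - (d + (1 - X' * A') * N'⁻¹ * l) * b) b)
    (A : Matrix (Fin m) (Fin k ⊕ Fin 1) ℂ)
    (hA : A = Matrix.fromCols A' a) :
    A * X * A = A ∧ X * A * X = X ∧
    (M * A * X)ᴴ = M * A * X ∧ (N * X * A)ᴴ = N * X * A := by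
  subst hNdef
  obtain ⟨hN', -, -, hn⟩ := isHermitian_fromBlocks_iff.mp hN.isHermitian
  have hdet : IsUnit N'.det :=
    (isUnit_iff_isUnit_det N').mp (hN.submatrix Sum.inl_injective (e := Sum.inl)).isUnit
  have ha : a = A' * d := by rw [← sub_eq_zero, ← hc, hceq]
  exact weighted_penrose_fromCols_of_eq_mul hN' hn hdet h1 h2 h3 h4 hd ha hδ hδne hb hX hA

/-- Recursive step of the Greville/Wang partitioning method (Lemma 2.1) in the
case `c = 0`: if `X'` is the weighted Moore-Penrose inverse of `A'` w.r.t.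
`(M, N')`, then the block matrix `X` built from `X'` and `b* = δ⁻¹(d*N' − l*)X'`
is the weighted Moore-Penrose inverse of `A = [A' | a]` w.r.t. `(M, N)`. -/
theorem weighted_moore_penrose_partition_step_c_eq_zero {m k : ℕ}
    (A' : Matrix (Fin m) (Fin k) ℂ) (a : Matrix (Fin m) (Fin 1) ℂ)
    (M : Matrix (Fin m) (Fin m) ℂ) (hM : M.PosDef)
    (N' : Matrix (Fin k) (Fin k) ℂ) (l : Matrix (Fin k) (Fin 1) ℂ)
    (n : Matrix (Fin 1) (Fin 1) ℂ)
    (N : Matrix (Fin k ⊕ Fin 1) (Fin k ⊕ Fin 1) ℂ)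
    (hNdef : N = Matrix.fromBlocks N' l lᴴ n)
    (hN : N.PosDef)
    (X' : Matrix (Fin k) (Fin m) ℂ)
    (h1 : A' * X' * A' = A') (h2 : X' * A' * X' = X')
    (h3 : (M * A' * X')ᴴ = M * A' * X') (h4 : (N' * X' * A')ᴴ = N' * X' * A')
    (d : Matrix (Fin k) (Fin 1) ℂ) (hd : d = X' * a)
    (c : Matrix (Fin m) (Fin 1) ℂ) (hc : c = a - A' * d)
    (hceq : c = 0)
    (δ : Matrix (Fin 1) (Fin 1) ℂ)
    (hδ : δ = n + dᴴ * N' * d - (dᴴ * l + lᴴ * d) - lᴴ * (1 - X' * A') * N'⁻¹ * l)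
    (hδne : δ 0 0 ≠ 0)
    (b : Matrix (Fin 1) (Fin m) ℂ)
    (hb : b = (δ 0 0)⁻¹ • ((dᴴ * N' - lᴴ) * X'))
    (X : Matrix (Fin k ⊕ Fin 1) (Fin m) ℂ)
    (hX : X = Matrix.fromRows (X' - (d + (1 - X' * A') * N'⁻¹ * l) * b) b)
    (A : Matrix (Fin m) (Fin k ⊕ Fin 1) ℂ)
    (hA : A = Matrix.fromCols A' a) :
    A * X * A = A ∧ X * A * X = X ∧
    (M * A * X)ᴴ = M * A * X ∧ (N * X * A)ᴴ = N * X * A :=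
  weighted_moore_penrose_partition_step_c_eq_zero_general A' a M N' l n N hNdef hN X' h1 h2 h3 h4 d
    hd c hc hceq δ hδ hδne b hb X hX A hA
end
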